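/- Let H be a 3-uniform hypergraph on n vertices with minimum positive co-degree strictly greater than (2/5)n. If H contains a copy of K_4^{3-} (vertices a,b,c,d with edges abc, abd, acd), then H contains at least one of: K_4^3, a copy of J_4, a copy of F_{3,2}^{++1}, or a copy of F_{3,2}^{++2}. -/
import Mathlib

open Finset

private lemma card3_le' {α : Type*} [DecidableEq α] (x y z : α) :
    ({x, y, z} : Finset α).card ≤ 3 := by
  have t1 := Finset.card_insert_le x ({y, z} : Finset α)
  have t2 := Finset.card_insert_le y ({z} : Finset α)
  have t3 : ({z} : Finset α).card = 1 := Finset.card_singleton z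
  omega

private lemma card3' {α : Type*} [DecidableEq α] {x y z : α}
    (h1 : x ≠ y) (h2 : x ≠ z) (h3 : y ≠ z) : ({x, y, z} : Finset α).card = 3 := by
  rw [Finset.card_insert_of_notMem (by simp [h1, h2]),
    Finset.card_insert_of_notMem (by simp [h3]), Finset.card_singleton]

private lemma card4' {α : Type*} [DecidableEq α] {x y z w : α}
    (h1 : x ≠ y) (h2 : x ≠ z) (h3 : x ≠ w) (h4 : y ≠ z) (h5 : y ≠ w) (h6 : z ≠ w) :
    ({x, y, z, w} : Finset α).card = 4 := by
  rw [Finset.card_insert_of_notMem (by simp [h1, h2, h3]), card3' h4 h5 h6]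

private lemma card5' {α : Type*} [DecidableEq α] {x y z w u : α}
    (h1 : x ≠ y) (h2 : x ≠ z) (h3 : x ≠ w) (h4 : x ≠ u) (h5 : y ≠ z) (h6 : y ≠ w)
    (h7 : y ≠ u) (h8 : z ≠ w) (h9 : z ≠ u) (h10 : w ≠ u) :
    ({x, y, z, w, u} : Finset α).card = 5 := by
  rw [Finset.card_insert_of_notMem (by simp [h1, h2, h3, h4]), card4' h5 h6 h7 h8 h9 h10]

private lemma four_distinct {α : Type*} [DecidableEq α] {x y z w : α}
    (h : ({x, y, z, w} : Finset α).card = 4) :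
    x ≠ y ∧ x ≠ z ∧ x ≠ w ∧ y ≠ z ∧ y ≠ w ∧ z ≠ w := by
  refine ⟨?_, ?_, ?_, ?_, ?_, ?_⟩
  · rintro rfl
    rw [show ({x, x, z, w} : Finset α) = {x, z, w} by ext i; simp; try tauto] at h
    have := card3_le' x z w; omega
  · rintro rfl
    rw [show ({x, y, x, w} : Finset α) = {x, y, w} by ext i; simp; try tauto] at h
    have := card3_le' x y w; omega
  · rintro rfl
    rw [show ({x, y, z, x} : Finset α) = {x, y, z} by ext i; simp; try tauto] at h
    have := card3_le' x y z; omega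
  · rintro rfl
    rw [show ({x, y, y, w} : Finset α) = {x, y, w} by ext i; simp; try tauto] at h
    have := card3_le' x y w; omega
  · rintro rfl
    rw [show ({x, y, z, y} : Finset α) = {x, y, z} by ext i; simp; try tauto] at h
    have := card3_le' x y z; omega
  · rintro rfl
    rw [show ({x, y, z, z} : Finset α) = {x, y, z} by ext i; simp; try tauto] at h
    have := card3_le' x y z; omega

/-- the "link" of a pair: third vertices of edges through `x, y`. -/
private def lk {n : ℕ} (H : Finset (Finset (Fin n))) (x y : Fin n) : Finset (Fin n) :=
  Finset.univ.filter (fun v => v ≠ x ∧ v ≠ y ∧ ({x, y, v} : Finset (Fin n)) ∈ H)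

private lemma lk_mem {n : ℕ} {H : Finset (Finset (Fin n))} {x y v : Fin n}
    (h : v ∈ lk H x y) : v ≠ x ∧ v ≠ y ∧ ({x, y, v} : Finset (Fin n)) ∈ H := by
  simpa [lk] using h

private lemma mem3 {n : ℕ} {H : Finset (Finset (Fin n))} {x y z : Fin n}
    (h : ({x, y, z} : Finset (Fin n)) ∈ H) (x' y' z' : Fin n)
    (hp : ∀ w : Fin n, (w = x' ∨ w = y' ∨ w = z') ↔ (w = x ∨ w = y ∨ w = z)) :
    ({x', y', z'} : Finset (Fin n)) ∈ H := by
  have he : ({x', y', z'} : Finset (Fin n)) = {x, y, z} := by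
    ext w
    simp only [Finset.mem_insert, Finset.mem_singleton]
    exact hp w
  rw [he]; exact h


set_option maxHeartbeats 1000000 in
private lemma pick3 (P1 P2 P3 P4 P5 : Prop) [Decidable P1] [Decidable P2] [Decidable P3]
    [Decidable P4] [Decidable P5]
    (h : 3 ≤ (if P1 then 1 else 0) + (if P2 then 1 else 0) + (if P3 then 1 else 0) +
      (if P4 then 1 else 0) + (if P5 then 1 else 0)) :
    (P1 ∧ P2 ∧ P3) ∨ (P1 ∧ P2 ∧ P4) ∨ (P1 ∧ P2 ∧ P5) ∨ (P1 ∧ P3 ∧ P4) ∨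
    (P1 ∧ P3 ∧ P5) ∨ (P1 ∧ P4 ∧ P5) ∨ (P2 ∧ P3 ∧ P4) ∨ (P2 ∧ P3 ∧ P5) ∨
    (P2 ∧ P4 ∧ P5) ∨ (P3 ∧ P4 ∧ P5) := by
  by_cases h1 : P1 <;> by_cases h2 : P2 <;> by_cases h3 : P3 <;> by_cases h4 : P4 <;>
    by_cases h5 : P5 <;> simp [h1, h2, h3, h4, h5] at h <;>
    first
      | exact Or.inl ⟨h1, h2, h3⟩
      | exact Or.inr (Or.inl ⟨h1, h2, h4⟩)
      | exact Or.inr (Or.inr (Or.inl ⟨h1, h2, h5⟩))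
      | exact Or.inr (Or.inr (Or.inr (Or.inl ⟨h1, h3, h4⟩)))
      | exact Or.inr (Or.inr (Or.inr (Or.inr (Or.inl ⟨h1, h3, h5⟩))))
      | exact Or.inr (Or.inr (Or.inr (Or.inr (Or.inr (Or.inl ⟨h1, h4, h5⟩)))))
      | exact Or.inr (Or.inr (Or.inr (Or.inr (Or.inr (Or.inr (Or.inl ⟨h2, h3, h4⟩))))))
      | exact Or.inr (Or.inr (Or.inr (Or.inr (Or.inr (Or.inr (Or.inr (Or.inl ⟨h2, h3, h5⟩)))))))
      | exact Or.inr (Or.inr (Or.inr (Or.inr (Or.inr (Or.inr (Or.inr (Or.inr (Or.inl ⟨h2, h4, h5⟩))))))))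
      | exact Or.inr (Or.inr (Or.inr (Or.inr (Or.inr (Or.inr (Or.inr (Or.inr (Or.inr ⟨h3, h4, h5⟩))))))))

set_option maxHeartbeats 1000000 in
private lemma mkJ4 {n : ℕ} {H : Finset (Finset (Fin n))} {x p q r s : Fin n}
    (h1 : x ≠ p) (h2 : x ≠ q) (h3 : x ≠ r) (h4 : x ≠ s) (h5 : p ≠ q) (h6 : p ≠ r)
    (h7 : p ≠ s) (h8 : q ≠ r) (h9 : q ≠ s) (h10 : r ≠ s)
    (e1 : ({x, p, q} : Finset (Fin n)) ∈ H) (e2 : ({x, p, r} : Finset (Fin n)) ∈ H)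
    (e3 : ({x, p, s} : Finset (Fin n)) ∈ H) (e4 : ({x, q, r} : Finset (Fin n)) ∈ H)
    (e5 : ({x, q, s} : Finset (Fin n)) ∈ H) (e6 : ({x, r, s} : Finset (Fin n)) ∈ H) :
    ∃ v : Fin 5 → Fin n, Function.Injective v ∧
      ∀ i j : Fin 5, 0 < i → i < j → ({v 0, v i, v j} : Finset (Fin n)) ∈ H := by
  refine ⟨![x, p, q, r, s], ?_, ?_⟩
  · intro i j hij
    fin_cases i <;> fin_cases j <;> simp_all
  · intro i j hi hij
    fin_cases i <;> fin_cases j <;>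
      first
        | exact absurd hi (by decide)
        | exact absurd hij (by decide)
        | exact e1 | exact e2 | exact e3 | exact e4 | exact e5 | exact e6

private lemma lk_card {n : ℕ} (H : Finset (Finset (Fin n)))
    (huniform : ∀ e ∈ H, e.card = 3) {x y : Fin n} (hxy : x ≠ y)
    (h : (2 / 5 : ℝ) * n < ((H.filter (fun e => x ∈ e ∧ y ∈ e)).card : ℝ)) :
    2 * n < 5 * (lk H x y).card := by
  have hsub : H.filter (fun e => x ∈ e ∧ y ∈ e) ⊆
      (lk H x y).image (fun v => ({x, y, v} : Finset (Fin n))) := by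
    intro e he
    rw [Finset.mem_filter] at he
    obtain ⟨heH, hxe, hye⟩ := he
    have hcard := huniform e heH
    have hpair : ({x, y} : Finset (Fin n)) ⊆ e := by
      intro w hw
      simp only [Finset.mem_insert, Finset.mem_singleton] at hw
      rcases hw with rfl | rfl
      exacts [hxe, hye]
    have hd : (e \ ({x, y} : Finset (Fin n))).card = 1 := by
      rw [Finset.card_sdiff_of_subset hpair, hcard, Finset.card_pair hxy]
    obtain ⟨v, hv⟩ := Finset.card_eq_one.mp hd
    have hvm : v ∈ e \ ({x, y} : Finset (Fin n)) := by
      rw [hv]; exact Finset.mem_singleton_self v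
    rw [Finset.mem_sdiff] at hvm
    obtain ⟨hve, hvn⟩ := hvm
    simp only [Finset.mem_insert, Finset.mem_singleton] at hvn
    push_neg at hvn
    obtain ⟨hvx, hvy⟩ := hvn
    have hsub2 : ({x, y, v} : Finset (Fin n)) ⊆ e := by
      intro w hw
      simp only [Finset.mem_insert, Finset.mem_singleton] at hw
      rcases hw with rfl | rfl | rfl
      exacts [hxe, hye, hve]
    have hc3 : ({x, y, v} : Finset (Fin n)).card = 3 :=
      card3' hxy (Ne.symm hvx) (Ne.symm hvy)
    have he2 : ({x, y, v} : Finset (Fin n)) = e :=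
      Finset.eq_of_subset_of_card_le hsub2 (by rw [hcard, hc3])
    rw [Finset.mem_image]
    refine ⟨v, ?_, he2⟩
    simp only [lk, Finset.mem_filter, Finset.mem_univ, true_and]
    exact ⟨hvx, hvy, he2 ▸ heH⟩
  have h1 : (H.filter (fun e => x ∈ e ∧ y ∈ e)).card ≤ (lk H x y).card :=
    le_trans (Finset.card_le_card hsub) (Finset.card_image_le)
  have h2 : ((H.filter (fun e => x ∈ e ∧ y ∈ e)).card : ℝ) ≤ ((lk H x y).card : ℝ) :=
    Nat.cast_le.2 h1
  have h3 : (2 : ℝ) * n < 5 * (lk H x y).card := by linarith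
  exact_mod_cast h3

set_option maxHeartbeats 1000000 in
/-- A 3-graph on `n` vertices with minimum positive co-degree
greater than `(2/5)n` that contains `K_4^{3-}` (on vertices `a,b,c,d` with edges
`abc, abd, acd`) contains `K_4^3`, or `J_4`, or `F_{3,2}^{++1}`, or `F_{3,2}^{++2}`. -/
theorem stmt_2 (n : ℕ) (H : Finset (Finset (Fin n)))
    (huniform : ∀ e ∈ H, e.card = 3)
    (hcodeg : ∀ x y : Fin n, x ≠ y → (∃ e ∈ H, x ∈ e ∧ y ∈ e) →
      (2 / 5 : ℝ) * n < ((H.filter (fun e => x ∈ e ∧ y ∈ e)).card : ℝ))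
    (a b c d : Fin n) (hdist : ({a, b, c, d} : Finset (Fin n)).card = 4)
    (habc : ({a, b, c} : Finset (Fin n)) ∈ H)
    (habd : ({a, b, d} : Finset (Fin n)) ∈ H)
    (hacd : ({a, c, d} : Finset (Fin n)) ∈ H) :
    -- K_4^3
    (∃ p q s t : Fin n, ({p, q, s, t} : Finset (Fin n)).card = 4 ∧
      ({p, q, s} : Finset (Fin n)) ∈ H ∧ ({p, q, t} : Finset (Fin n)) ∈ H ∧
      ({p, s, t} : Finset (Fin n)) ∈ H ∧ ({q, s, t} : Finset (Fin n)) ∈ H) ∨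
    -- J_4
    (∃ v : Fin 5 → Fin n, Function.Injective v ∧
      ∀ i j : Fin 5, 0 < i → i < j → ({v 0, v i, v j} : Finset (Fin n)) ∈ H) ∨
    -- F_{3,2}^{++1} on (p,q,s,t,u) = (a,b,c,d,e): edges abc abd abe cde acd ace
    (∃ p q s t u : Fin n, ({p, q, s, t, u} : Finset (Fin n)).card = 5 ∧
      ({p, q, s} : Finset (Fin n)) ∈ H ∧ ({p, q, t} : Finset (Fin n)) ∈ H ∧
      ({p, q, u} : Finset (Fin n)) ∈ H ∧ ({s, t, u} : Finset (Fin n)) ∈ H ∧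
      ({p, s, t} : Finset (Fin n)) ∈ H ∧ ({p, s, u} : Finset (Fin n)) ∈ H) ∨
    -- F_{3,2}^{++2} on (p,q,s,t,u) = (a,b,c,d,e): edges abc abd abe cde acd bce
    (∃ p q s t u : Fin n, ({p, q, s, t, u} : Finset (Fin n)).card = 5 ∧
      ({p, q, s} : Finset (Fin n)) ∈ H ∧ ({p, q, t} : Finset (Fin n)) ∈ H ∧
      ({p, q, u} : Finset (Fin n)) ∈ H ∧ ({s, t, u} : Finset (Fin n)) ∈ H ∧
      ({p, s, t} : Finset (Fin n)) ∈ H ∧ ({q, s, u} : Finset (Fin n)) ∈ H) := by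
  obtain ⟨hab, hac, had, hbc, hbd, hcd⟩ := four_distinct hdist
  -- link size bounds for the five pairs ab, ac, ad, bc, bd
  have hb1 : 2 * n < 5 * (lk H a b).card :=
    lk_card H huniform hab (hcodeg a b hab ⟨{a, b, c}, habc, by simp, by simp⟩)
  have hb2 : 2 * n < 5 * (lk H a c).card :=
    lk_card H huniform hac (hcodeg a c hac ⟨{a, b, c}, habc, by simp, by simp⟩)
  have hb3 : 2 * n < 5 * (lk H a d).card :=
    lk_card H huniform had (hcodeg a d had ⟨{a, b, d}, habd, by simp, by simp⟩)
  have hb4 : 2 * n < 5 * (lk H b c).card :=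
    lk_card H huniform hbc (hcodeg b c hbc ⟨{a, b, c}, habc, by simp, by simp⟩)
  have hb5 : 2 * n < 5 * (lk H b d).card :=
    lk_card H huniform hbd (hcodeg b d hbd ⟨{a, b, d}, habd, by simp, by simp⟩)
  -- pigeonhole: some vertex lies in at least 3 of the five links
  have hex : ∃ v : Fin n, 3 ≤
      (if v ∈ lk H a b then 1 else 0) + (if v ∈ lk H a c then 1 else 0) +
      (if v ∈ lk H a d then 1 else 0) + (if v ∈ lk H b c then 1 else 0) +
      (if v ∈ lk H b d then 1 else 0) := by
    by_contra hno
    push_neg at hno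
    have hsum : (∑ v : Fin n,
        ((if v ∈ lk H a b then 1 else 0) + (if v ∈ lk H a c then 1 else 0) +
        (if v ∈ lk H a d then 1 else 0) + (if v ∈ lk H b c then 1 else 0) +
        (if v ∈ lk H b d then 1 else 0))) ≤ 2 * n := by
      calc (∑ v : Fin n,
          ((if v ∈ lk H a b then 1 else 0) + (if v ∈ lk H a c then 1 else 0) +
          (if v ∈ lk H a d then 1 else 0) + (if v ∈ lk H b c then 1 else 0) +
          (if v ∈ lk H b d then 1 else 0))) ≤ ∑ _v : Fin n, 2 :=
            Finset.sum_le_sum (fun i _ => by have := hno i; omega)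
        _ = 2 * n := by simp [Finset.sum_const, Finset.card_univ, mul_comm]
    have heq : (∑ v : Fin n,
        ((if v ∈ lk H a b then 1 else 0) + (if v ∈ lk H a c then 1 else 0) +
        (if v ∈ lk H a d then 1 else 0) + (if v ∈ lk H b c then 1 else 0) +
        (if v ∈ lk H b d then 1 else 0))) =
        (lk H a b).card + (lk H a c).card + (lk H a d).card +
        (lk H b c).card + (lk H b d).card := by
      rw [Finset.sum_add_distrib, Finset.sum_add_distrib, Finset.sum_add_distrib,
        Finset.sum_add_distrib]
      simp [Finset.sum_boole]
    rw [heq] at hsum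
    omega
  obtain ⟨v, hv⟩ := hex
  have key : (v ∈ lk H a b ∧ v ∈ lk H a c ∧ v ∈ lk H a d) ∨
      (v ∈ lk H a b ∧ v ∈ lk H a c ∧ v ∈ lk H b c) ∨
      (v ∈ lk H a b ∧ v ∈ lk H a c ∧ v ∈ lk H b d) ∨
      (v ∈ lk H a b ∧ v ∈ lk H a d ∧ v ∈ lk H b c) ∨
      (v ∈ lk H a b ∧ v ∈ lk H a d ∧ v ∈ lk H b d) ∨
      (v ∈ lk H a b ∧ v ∈ lk H b c ∧ v ∈ lk H b d) ∨
      (v ∈ lk H a c ∧ v ∈ lk H a d ∧ v ∈ lk H b c) ∨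
      (v ∈ lk H a c ∧ v ∈ lk H a d ∧ v ∈ lk H b d) ∨
      (v ∈ lk H a c ∧ v ∈ lk H b c ∧ v ∈ lk H b d) ∨
      (v ∈ lk H a d ∧ v ∈ lk H b c ∧ v ∈ lk H b d) :=
    pick3 _ _ _ _ _ hv
  clear hv hb1 hb2 hb3 hb4 hb5
  rcases key with ⟨h1, h2, h3⟩ | ⟨h1, h2, h4⟩ | ⟨h1, h2, h5⟩ | ⟨h1, h3, h4⟩ |
    ⟨h1, h3, h5⟩ | ⟨h1, h4, h5⟩ | ⟨h2, h3, h4⟩ | ⟨h2, h3, h5⟩ | ⟨h2, h4, h5⟩ | ⟨h3, h4, h5⟩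
  · -- ab, ac, ad : J_4 with apex a on {b,c,d,v}
    obtain ⟨hva, hvb, eab⟩ := lk_mem h1
    obtain ⟨_, hvc, eac⟩ := lk_mem h2
    obtain ⟨_, hvd, ead⟩ := lk_mem h3
    exact Or.inr (Or.inl (mkJ4 hab hac had hva.symm hbc hbd hvb.symm hcd hvc.symm
      hvd.symm habc habd eab hacd eac ead))
  · -- ab, ac, bc : K_4^3 on (a,b,c,v)
    obtain ⟨hva, hvb, eab⟩ := lk_mem h1
    obtain ⟨_, hvc, eac⟩ := lk_mem h2
    obtain ⟨_, _, ebc⟩ := lk_mem h4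
    exact Or.inl ⟨a, b, c, v, card4' hab hac hva.symm hbc hvb.symm hvc.symm,
      habc, eab, eac, ebc⟩
  · -- ab, ac, bd : F++1 on (a,c,b,d,v)
    obtain ⟨hva, hvb, eab⟩ := lk_mem h1
    obtain ⟨_, hvc, eac⟩ := lk_mem h2
    obtain ⟨_, hvd, ebd⟩ := lk_mem h5
    refine Or.inr (Or.inr (Or.inl ⟨a, c, b, d, v,
      card5' hac hab had hva.symm hbc.symm hcd hvc.symm hbd hvb.symm hvd.symm,
      mem3 habc a c b (by tauto), hacd, eac, ebd, habd, eab⟩))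
  · -- ab, ad, bc : F++1 on (a,d,b,c,v)
    obtain ⟨hva, hvb, eab⟩ := lk_mem h1
    obtain ⟨_, hvd, ead⟩ := lk_mem h3
    obtain ⟨_, hvc, ebc⟩ := lk_mem h4
    refine Or.inr (Or.inr (Or.inl ⟨a, d, b, c, v,
      card5' had hab hac hva.symm hbd.symm hcd.symm hvd.symm hbc hvb.symm hvc.symm,
      mem3 habd a d b (by tauto), mem3 hacd a d c (by tauto), ead, ebc, habc, eab⟩))
  · -- ab, ad, bd : K_4^3 on (a,b,d,v)
    obtain ⟨hva, hvb, eab⟩ := lk_mem h1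
    obtain ⟨_, hvd, ead⟩ := lk_mem h3
    obtain ⟨_, _, ebd⟩ := lk_mem h5
    exact Or.inl ⟨a, b, d, v, card4' hab had hva.symm hbd hvb.symm hvd.symm,
      habd, eab, ead, ebd⟩
  · -- ab, bc, bd : F++1 on (b,v,a,c,d)
    obtain ⟨hva, hvb, eab⟩ := lk_mem h1
    obtain ⟨_, hvc, ebc⟩ := lk_mem h4
    obtain ⟨_, hvd, ebd⟩ := lk_mem h5
    refine Or.inr (Or.inr (Or.inl ⟨b, v, a, c, d,
      card5' hvb.symm hab.symm hbc hbd hva hvc hvd hac had hcd,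
      mem3 eab b v a (by tauto), mem3 ebc b v c (by tauto), mem3 ebd b v d (by tauto),
      hacd, mem3 habc b a c (by tauto), mem3 habd b a d (by tauto)⟩))
  · -- ac, ad, bc : F++1 on (a,d,c,b,v)
    obtain ⟨hva, hvc, eac⟩ := lk_mem h2
    obtain ⟨_, hvd, ead⟩ := lk_mem h3
    obtain ⟨hvb, _, ebc⟩ := lk_mem h4
    refine Or.inr (Or.inr (Or.inl ⟨a, d, c, b, v,
      card5' had hac hab hva.symm hcd.symm hbd.symm hvd.symm hbc.symm hvc.symm hvb.symm,
      mem3 hacd a d c (by tauto), mem3 habd a d b (by tauto), ead,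
      mem3 ebc c b v (by tauto), mem3 habc a c b (by tauto), eac⟩))
  · -- ac, ad, bd : F++1 on (a,c,d,b,v)
    obtain ⟨hva, hvc, eac⟩ := lk_mem h2
    obtain ⟨_, hvd, ead⟩ := lk_mem h3
    obtain ⟨hvb, _, ebd⟩ := lk_mem h5
    refine Or.inr (Or.inr (Or.inl ⟨a, c, d, b, v,
      card5' hac had hab hva.symm hcd hbc.symm hvc.symm hbd.symm hvd.symm hvb.symm,
      hacd, mem3 habc a c b (by tauto), eac,
      mem3 ebd d b v (by tauto), mem3 habd a d b (by tauto), ead⟩))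
  · -- ac, bc, bd : F++2 on (a,c,b,d,v)
    obtain ⟨hva, hvc, eac⟩ := lk_mem h2
    obtain ⟨hvb, _, ebc⟩ := lk_mem h4
    obtain ⟨_, hvd, ebd⟩ := lk_mem h5
    refine Or.inr (Or.inr (Or.inr ⟨a, c, b, d, v,
      card5' hac hab had hva.symm hbc.symm hcd hvc.symm hbd hvb.symm hvd.symm,
      mem3 habc a c b (by tauto), hacd, eac, ebd, habd, mem3 ebc c b v (by tauto)⟩))
  · -- ad, bc, bd : F++2 on (a,d,b,c,v)
    obtain ⟨hva, hvd, ead⟩ := lk_mem h3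
    obtain ⟨hvb, hvc, ebc⟩ := lk_mem h4
    obtain ⟨_, _, ebd⟩ := lk_mem h5
    refine Or.inr (Or.inr (Or.inr ⟨a, d, b, c, v,
      card5' had hab hac hva.symm hbd.symm hcd.symm hvd.symm hbc hvb.symm hvc.symm,
      mem3 habd a d b (by tauto), mem3 hacd a d c (by tauto), ead, ebc, habc,
      mem3 ebd d b v (by tauto)⟩))
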